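/- Fix an integer n ≥ 3, ω₀ > 0, γ > 0, T₋ > 0 and a real number ℱ. Define, for smooth functions F : ℝ^{n+1} × ℝ^{n+1} → ℝ of variables (q, p) = (q₀,…,q_n, p₀,…,p_n): the operator 𝒜F = Σ_{x=0}^n p_x ∂_{q_x}F + Σ_{x=0}^n ((Δ_N q)_x − ω₀² q_x) ∂_{p_x}F + ℱ ∂_{p_n}F; the flip operator S_flip F(q, p) = Σ_{x=1}^n (F(q, p^x) − F(q, p)), where p^x is p with the sign of the x-th coordinate reversed; the operator S₋F = T₋ ∂²_{p₀}F − p₀ ∂_{p₀}F; and 𝒢 = 𝒜 + γ S_flip + 2γ S₋. Define 𝔣_x = (1/(4γ))(q_{x+1} − q_x)(p_x + p_{x+1}) + (1/4)(q_{x+1} − q_x)², 𝔉_x = p_x² + (q_{x+1} − q_x)(q_x − q_{x−1}) − ω₀² q_x² (with the conventions q_{−1} = q₀ and q_{n+1} = q_n), and j_{x,x+1} = −p_x (q_{x+1} − q_x). Then for every x with 1 ≤ x ≤ n − 2, the fluctuation–dissipation identity 𝒢 𝔣_x = (1/(4γ))(𝔉_{x+1} − 𝔉_x) + j_{x,x+1}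 holds pointwise on ℝ^{2(n+1)}. -/

import Mathlib

/-!
The corrector `𝔣_x` only involves the variables of the bond `(x, x+1)`, so for a bulk bond the
thermostat at site `0` and the forcing at site `n` do not see it, and `𝒢 𝔣_x` reduces to the
derivatives at the two sites. Write `r = q_{x+1} − q_x` and `s = p_x + p_{x+1}`. Applied to
`r s / (4γ)`, `𝒜` gives `(p_{x+1}² − p_x²)/(4γ)` plus `r/(4γ)` times the forces at `x` and `x+1`,
which is `(𝔉_{x+1} − 𝔉_x)/(4γ)`, while `γ S_flip` gives `−r s / 2`. Applied to `r²/4`, `𝒜` gives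
`r (p_{x+1} − p_x)/2` and the flips give nothing; the two `r`-terms add up to `−p_x r = j_{x,x+1}`.
-/

open Real

noncomputable section

/-- The discrete Neumann Laplacian on `{0,…,n}`:
`(Δ_N f)_x = f_{x+1} + f_{x−1} − 2 f_x` with the conventions `f_{−1} := f₀`, `f_{n+1} := f_n`. -/
def neumannLap (n : ℕ) (f : ℕ → ℝ) (x : ℕ) : ℝ :=
  (if x = n then f x else f (x + 1)) + (if x = 0 then f x else f (x - 1)) - 2 * f x

/-- Partial derivative `∂_{q_x} F` at the configuration `(q, p)`. -/
def dq (F : (ℕ → ℝ) × (ℕ → ℝ) → ℝ) (x : ℕ) (qp : (ℕ → ℝ) × (ℕ → ℝ)) : ℝ :=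
  deriv (fun t => F (Function.update qp.1 x t, qp.2)) (qp.1 x)

/-- Partial derivative `∂_{p_x} F` at the configuration `(q, p)`. -/
def dp (F : (ℕ → ℝ) × (ℕ → ℝ) → ℝ) (x : ℕ) (qp : (ℕ → ℝ) × (ℕ → ℝ)) : ℝ :=
  deriv (fun t => F (qp.1, Function.update qp.2 x t)) (qp.2 x)

/-- Second partial derivative `∂²_{p_x} F` at the configuration `(q, p)`. -/
def dpp (F : (ℕ → ℝ) × (ℕ → ℝ) → ℝ) (x : ℕ) (qp : (ℕ → ℝ) × (ℕ → ℝ)) : ℝ :=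
  deriv (fun t => deriv (fun s => F (qp.1, Function.update qp.2 x s)) t) (qp.2 x)

/-- The Hamiltonian (transport) part `𝒜` of the generator, with constant forcing `𝓕` acting on
the momentum of the right-most particle `x = n`. -/
def genA (n : ℕ) (ω₀ 𝓕 : ℝ) (F : (ℕ → ℝ) × (ℕ → ℝ) → ℝ) (qp : (ℕ → ℝ) × (ℕ → ℝ)) : ℝ :=
  (∑ x ∈ Finset.range (n + 1), qp.2 x * dq F x qp)
    + (∑ x ∈ Finset.range (n + 1), (neumannLap n qp.1 x - ω₀ ^ 2 * qp.1 x) * dp F x qp)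
    + 𝓕 * dp F n qp

/-- The velocity flip operator `S_flip F(q,p) = Σ_{x=1}^n (F(q, p^x) − F(q, p))`, where `p^x`
is `p` with the sign of the `x`-th coordinate reversed. -/
def sFlip (n : ℕ) (F : (ℕ → ℝ) × (ℕ → ℝ) → ℝ) (qp : (ℕ → ℝ) × (ℕ → ℝ)) : ℝ :=
  ∑ x ∈ Finset.Icc 1 n, (F (qp.1, Function.update qp.2 x (-(qp.2 x))) - F qp)

/-- The Langevin thermostat operator `S₋ F = Tm ∂²_{p₀} F − p₀ ∂_{p₀} F`. -/
def sMinus (Tm : ℝ) (F : (ℕ → ℝ) × (ℕ → ℝ) → ℝ) (qp : (ℕ → ℝ) × (ℕ → ℝ)) : ℝ :=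
  Tm * dpp F 0 qp - qp.2 0 * dp F 0 qp

/-- The full generator `𝒢 = 𝒜 + γ S_flip + 2γ S₋`. -/
def gen (n : ℕ) (ω₀ γ Tm 𝓕 : ℝ) (F : (ℕ → ℝ) × (ℕ → ℝ) → ℝ)
    (qp : (ℕ → ℝ) × (ℕ → ℝ)) : ℝ :=
  genA n ω₀ 𝓕 F qp + γ * sFlip n F qp + 2 * γ * sMinus Tm F qp

/-- The fluctuation–dissipation corrector
`𝔣_x = (1/(4γ))(q_{x+1} − q_x)(p_x + p_{x+1}) + (1/4)(q_{x+1} − q_x)²`. -/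
def corrSmallF (γ : ℝ) (x : ℕ) (qp : (ℕ → ℝ) × (ℕ → ℝ)) : ℝ :=
  (1 / (4 * γ)) * (qp.1 (x + 1) - qp.1 x) * (qp.2 x + qp.2 (x + 1))
    + (1 / 4) * (qp.1 (x + 1) - qp.1 x) ^ 2

/-- `𝔉_x = p_x² + (q_{x+1} − q_x)(q_x − q_{x−1}) − ω₀² q_x²`, with the conventions
`q_{−1} = q₀` and `q_{n+1} = q_n`. -/
def corrBigF (n : ℕ) (ω₀ : ℝ) (x : ℕ) (qp : (ℕ → ℝ) × (ℕ → ℝ)) : ℝ :=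
  qp.2 x ^ 2
    + ((if x = n then qp.1 x else qp.1 (x + 1)) - qp.1 x) *
        (qp.1 x - (if x = 0 then qp.1 x else qp.1 (x - 1)))
    - ω₀ ^ 2 * qp.1 x ^ 2

/-- The microscopic energy current `j_{x,x+1} = −p_x (q_{x+1} − q_x)`. -/
def curr (x : ℕ) (qp : (ℕ → ℝ) × (ℕ → ℝ)) : ℝ :=
  -(qp.2 x) * (qp.1 (x + 1) - qp.1 x)

open Function Finset

def IsBondLocal (x : ℕ) (F : (ℕ → ℝ) × (ℕ → ℝ) → ℝ) : Prop :=
  ∀ qp : (ℕ → ℝ) × (ℕ → ℝ), ∀ y, y ≠ x → y ≠ x + 1 → ∀ t,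
    F (update qp.1 y t, qp.2) = F qp ∧ F (qp.1, update qp.2 y t) = F qp

section Generator

variable {F : (ℕ → ℝ) × (ℕ → ℝ) → ℝ} {n x y : ℕ} {qp : (ℕ → ℝ) × (ℕ → ℝ)}

theorem dq_eq_zero_of_update (h : ∀ t, F (update qp.1 y t, qp.2) = F qp) : dq F y qp = 0 := by
  simp [dq, h]

theorem dp_eq_zero_of_update (h : ∀ t, F (qp.1, update qp.2 y t) = F qp) : dp F y qp = 0 := by
  simp [dp, h]

theorem dpp_eq_zero_of_update (h : ∀ t, F (qp.1, update qp.2 y t) = F qp) : dpp F y qp = 0 := by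
  simp [dpp, h]

theorem genA_eq_of_isBondLocal (ω₀ 𝓕 : ℝ) (hF : IsBondLocal x F) (hxn : x + 1 < n) :
    genA n ω₀ 𝓕 F qp
      = qp.2 x * dq F x qp + qp.2 (x + 1) * dq F (x + 1) qp
        + ((neumannLap n qp.1 x - ω₀ ^ 2 * qp.1 x) * dp F x qp
          + (neumannLap n qp.1 (x + 1) - ω₀ ^ 2 * qp.1 (x + 1)) * dp F (x + 1) qp) := by
  have hx : x ∈ range (n + 1) := mem_range.2 (by omega)
  have hx' : x + 1 ∈ range (n + 1) := mem_range.2 (by omega)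
  have hne : x ≠ x + 1 := by omega
  rw [genA, sum_eq_add_of_mem x (x + 1) hx hx' hne, sum_eq_add_of_mem x (x + 1) hx hx' hne,
    dp_eq_zero_of_update fun t => (hF qp n (by omega) (by omega) t).2, mul_zero, add_zero]
  · intro y _ hy
    rw [dp_eq_zero_of_update fun t => (hF qp y hy.1 hy.2 t).2, mul_zero]
  · intro y _ hy
    rw [dq_eq_zero_of_update fun t => (hF qp y hy.1 hy.2 t).1, mul_zero]

theorem sFlip_eq_of_isBondLocal (hF : IsBondLocal x F) (hx : 1 ≤ x) (hxn : x + 1 ≤ n) :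
    sFlip n F qp
      = (F (qp.1, update qp.2 x (-qp.2 x)) - F qp)
        + (F (qp.1, update qp.2 (x + 1) (-qp.2 (x + 1))) - F qp) :=
  sum_eq_add_of_mem x (x + 1) (mem_Icc.2 ⟨hx, by omega⟩) (mem_Icc.2 ⟨by omega, hxn⟩)
    (by omega) fun y _ hy => sub_eq_zero.2 (hF qp y hy.1 hy.2 _).2

theorem sMinus_eq_zero_of_isBondLocal (Tm : ℝ) (hF : IsBondLocal x F) (hx : 1 ≤ x) :
    sMinus Tm F qp = 0 := by
  have h := fun t => (hF qp 0 (by omega) (by omega) t).2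
  rw [sMinus, dpp_eq_zero_of_update h, dp_eq_zero_of_update h]
  ring

end Generator

section Corrector

variable (γ : ℝ) (x : ℕ) (qp : (ℕ → ℝ) × (ℕ → ℝ))

theorem isBondLocal_corrSmallF : IsBondLocal x (corrSmallF γ x) := fun qp y hx hx' _ => by
  simp [corrSmallF, update_of_ne hx.symm, update_of_ne hx'.symm]

theorem dq_corrSmallF_self :
    dq (corrSmallF γ x) x qp
      = -((qp.2 x + qp.2 (x + 1)) / (4 * γ) + (qp.1 (x + 1) - qp.1 x) / 2) := by
  have hbond : HasDerivAt (fun t => qp.1 (x + 1) - t) (-1) (qp.1 x) := by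
    simpa using (hasDerivAt_id (qp.1 x)).const_sub (qp.1 (x + 1))
  have h := ((hbond.const_mul (1 / (4 * γ))).mul_const (qp.2 x + qp.2 (x + 1))).add
    ((hbond.pow 2).const_mul (1 / 4))
  simp only [dq, corrSmallF, update_self, update_of_ne (show x + 1 ≠ x by omega)]
  exact h.deriv.trans (by ring)

theorem dq_corrSmallF_succ :
    dq (corrSmallF γ x) (x + 1) qp
      = (qp.2 x + qp.2 (x + 1)) / (4 * γ) + (qp.1 (x + 1) - qp.1 x) / 2 := by
  have hbond : HasDerivAt (fun t => t - qp.1 x) 1 (qp.1 (x + 1)) :=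
    (hasDerivAt_id _).sub_const _
  have h := ((hbond.const_mul (1 / (4 * γ))).mul_const (qp.2 x + qp.2 (x + 1))).add
    ((hbond.pow 2).const_mul (1 / 4))
  simp only [dq, corrSmallF, update_self, update_of_ne (show x ≠ x + 1 by omega)]
  exact h.deriv.trans (by ring)

theorem dp_corrSmallF_self : dp (corrSmallF γ x) x qp = (qp.1 (x + 1) - qp.1 x) / (4 * γ) := by
  have h := (((hasDerivAt_id (qp.2 x)).add_const (qp.2 (x + 1))).const_mul
    (1 / (4 * γ) * (qp.1 (x + 1) - qp.1 x))).add_const (1 / 4 * (qp.1 (x + 1) - qp.1 x) ^ 2)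
  simp only [dp, corrSmallF, update_self, update_of_ne (show x + 1 ≠ x by omega)]
  exact h.deriv.trans (by ring)

theorem dp_corrSmallF_succ :
    dp (corrSmallF γ x) (x + 1) qp = (qp.1 (x + 1) - qp.1 x) / (4 * γ) := by
  have h := (((hasDerivAt_id (qp.2 (x + 1))).const_add (qp.2 x)).const_mul
    (1 / (4 * γ) * (qp.1 (x + 1) - qp.1 x))).add_const (1 / 4 * (qp.1 (x + 1) - qp.1 x) ^ 2)
  simp only [dp, corrSmallF, update_self, update_of_ne (show x ≠ x + 1 by omega)]
  exact h.deriv.trans (by ring)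

theorem corrSmallF_flip_self :
    corrSmallF γ x (qp.1, update qp.2 x (-qp.2 x)) - corrSmallF γ x qp
      = -2 * qp.2 x * ((qp.1 (x + 1) - qp.1 x) / (4 * γ)) := by
  simp only [corrSmallF, update_self, update_of_ne (show x + 1 ≠ x by omega)]
  ring

theorem corrSmallF_flip_succ :
    corrSmallF γ x (qp.1, update qp.2 (x + 1) (-qp.2 (x + 1))) - corrSmallF γ x qp
      = -2 * qp.2 (x + 1) * ((qp.1 (x + 1) - qp.1 x) / (4 * γ)) := by
  simp only [corrSmallF, update_self, update_of_ne (show x ≠ x + 1 by omega)]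
  ring

end Corrector

theorem fluctuation_dissipation (n : ℕ) (ω₀ γ Tm 𝓕 : ℝ)
    (hγ : 0 < γ)
    (x : ℕ) (hx1 : 1 ≤ x) (hx2 : x ≤ n - 2) (qp : (ℕ → ℝ) × (ℕ → ℝ)) :
    gen n ω₀ γ Tm 𝓕 (corrSmallF γ x) qp
      = (1 / (4 * γ)) * (corrBigF n ω₀ (x + 1) qp - corrBigF n ω₀ x qp) + curr x qp := by
  have hloc := isBondLocal_corrSmallF γ x
  rw [gen, genA_eq_of_isBondLocal ω₀ 𝓕 hloc (by omega),
    sFlip_eq_of_isBondLocal hloc hx1 (by omega), sMinus_eq_zero_of_isBondLocal Tm hloc hx1,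
    dq_corrSmallF_self, dq_corrSmallF_succ, dp_corrSmallF_self, dp_corrSmallF_succ,
    corrSmallF_flip_self, corrSmallF_flip_succ]
  simp only [corrBigF, curr, neumannLap, if_neg (show x ≠ n by omega),
    if_neg (show x ≠ 0 by omega), if_neg (show x + 1 ≠ n by omega),
    if_neg (show x + 1 ≠ 0 by omega), Nat.add_sub_cancel]
  field_simp
  ring

end
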